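/- arXiv:2503.09858 — 2 statements merged into one kernel-verified Lean document; each statement's English description precedes it below -/
import Mathlib

section
/- In Model I (commentariat investigates developers), if v - b_{f0} > 0 then there is no internal equilibrium in (0,1)^4; that is, the system F_1 = F_2 = F_3 = F_4 = 0 has no solution with all coordinates strictly between 0 and 1. -/
/-- Model I: if `v - b_f0 > 0` there is no internal equilibrium in `(0,1)⁴`. -/
theorem modelI_no_internal_equilibrium_of_v_gt_bfo
    (bI cw cI bU bP cP u v bfo cR pw ε : ℝ)
    (hbI : 0 < bI) (hcw : 0 < cw) (hcI : 0 < cI) (hbU : 0 < bU)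
    (hbP : 0 < bP) (hcP : 0 < cP) (hu : 0 < u) (hv : 0 < v)
    (hbfo : 0 < bfo) (hcR : 0 < cR) (hpw : 0 < pw) (hpw1 : pw < 1)
    (hε : ε ≤ 1) (hvb : v - bfo > 0) :
    ¬ ∃ x y z w : ℝ, x ∈ Set.Ioo (0:ℝ) 1 ∧ y ∈ Set.Ioo (0:ℝ) 1 ∧
      z ∈ Set.Ioo (0:ℝ) 1 ∧ w ∈ Set.Ioo (0:ℝ) 1 ∧
      y * pw * (bI + cw) - cI = 0 ∧
      bU * ((x - 1) * pw * ((z - 1) * ε + z) + z) = 0 ∧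
      (x - 1) * y * pw * (2 * bP - u * w) + y * bP - cP = 0 ∧
      -(x - 1) * y * (z - 1) * pw * (v - bfo) - cR = 0 := by
  rintro ⟨x, y, z, w, ⟨hx0, hx1⟩, ⟨hy0, hy1⟩, ⟨hz0, hz1⟩, ⟨hw0, hw1⟩, h1, h2, h3, h4⟩
  nlinarith [mul_pos (mul_pos (mul_pos (sub_pos.2 hx1) hy0) (sub_pos.2 hz1)) hpw,
    mul_pos (mul_pos (mul_pos (mul_pos (sub_pos.2 hx1) hy0) (sub_pos.2 hz1)) hpw) hvb]
end

section
/- In Model I, if 0 < ε < 1 then there is no internal equilibrium in (0,1)^4. -/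
/-- Model I: if `0 < ε < 1` there is no internal equilibrium in `(0,1)⁴`. -/
theorem modelI_no_internal_equilibrium_of_eps_in_01
    (bI cw cI bU bP cP u v bfo cR pw ε : ℝ)
    (hbI : 0 < bI) (hcw : 0 < cw) (hcI : 0 < cI) (hbU : 0 < bU)
    (hpw : 0 < pw) (hpw1 : pw < 1)
    (hε0 : 0 < ε) (hε1 : ε < 1) :
    ¬ ∃ x y z w : ℝ, x ∈ Set.Ioo (0:ℝ) 1 ∧ y ∈ Set.Ioo (0:ℝ) 1 ∧
      z ∈ Set.Ioo (0:ℝ) 1 ∧ w ∈ Set.Ioo (0:ℝ) 1 ∧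
      y * pw * (bI + cw) - cI = 0 ∧
      bU * ((x - 1) * pw * ((z - 1) * ε + z) + z) = 0 ∧
      (x - 1) * y * pw * (2 * bP - u * w) + y * bP - cP = 0 ∧
      -(x - 1) * y * (z - 1) * pw * (v - bfo) - cR = 0 := by
  rintro ⟨x, y, z, w, ⟨hx0, hx1⟩, _, ⟨hz0, hz1⟩, _, _, hF2, _, _⟩
  have hE : (x - 1) * pw * ((z - 1) * ε + z) + z = 0 := by
    rcases mul_eq_zero.mp hF2 with h | h
    · exact absurd h (ne_of_gt hbU)
    · exact h
  have ha0 : 0 < (1 - x) * pw := mul_pos (by linarith) hpw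
  have ha1 : (1 - x) * pw < 1 := by nlinarith
  -- z * ((1-x)*pw*(1+ε) - 1) = (1-x)*pw*ε
  have key : z * ((1 - x) * pw * (1 + ε) - 1) = (1 - x) * pw * ε := by ring_nf; nlinarith [hE]
  have hpos : 0 < (1 - x) * pw * ε := mul_pos ha0 hε0
  have hfac : 0 < (1 - x) * pw * (1 + ε) - 1 := by
    by_contra h
    push_neg at h
    nlinarith
  nlinarith [mul_lt_mul_of_pos_right hz1 hfac]
end
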